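/- arXiv:math/9710218 — 2 statements merged into one kernel-verified Lean document; each statement's English description precedes it below -/
import Mathlib

section
/- For every nonempty basic open set $[\nu] \subseteq {}^{\kappa}2$ with $\nu \in {}^{<\kappa}2$, the set $[\nu] \setminus \mathrm{CUB}$ is not meager, where CUB is the set of $\eta \in {}^{\kappa}2$ whose value is $1$ on some club of $\kappa$. -/
open Cardinal Set

noncomputable section

/-- The basic open set `[ν]` determined by a pattern `ν` of length `β`:
all `η` agreeing with `ν` below `β`. -/
def cyl (β : Ordinal.{0}) (ν : Ordinal.{0} → Bool) : Set (Ordinal.{0} → Bool) :=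
  {η | ∀ i < β, η i = ν i}

/-- `A` is nowhere dense in `^κ2`: every `ν ∈ ^{<κ}2` has an extension `η`
whose basic open set avoids `A`. -/
def Nwd (κ : Cardinal.{0}) (A : Set (Ordinal.{0} → Bool)) : Prop :=
  ∀ β < κ.ord, ∀ ν : Ordinal.{0} → Bool,
    ∃ γ, γ < κ.ord ∧ β ≤ γ ∧ ∃ η : Ordinal.{0} → Bool,
      (∀ i < β, η i = ν i) ∧ cyl γ η ∩ A = ∅

/-- `A` is meager in `^κ2`: covered by a union of `κ` many nowhere dense sets. -/
def MeagerB (κ : Cardinal.{0}) (A : Set (Ordinal.{0} → Bool)) : Prop :=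
  ∃ R : Ordinal.{0} → Set (Ordinal.{0} → Bool),
    (∀ ξ < κ.ord, Nwd κ (R ξ)) ∧ A ⊆ ⋃ ξ ∈ Set.Iio κ.ord, R ξ

/-- `A` is open in the bounded topology on `^κ2`. -/
def IsOpenB (κ : Cardinal.{0}) (A : Set (Ordinal.{0} → Bool)) : Prop :=
  ∀ η ∈ A, ∃ i < κ.ord, cyl i η ⊆ A

/-- `C` is a closed unbounded subset of (the ordinals below) `o`. -/
def ClubIn (o : Ordinal.{0}) (C : Set Ordinal.{0}) : Prop :=
  C ⊆ Set.Iio o ∧ (∀ β < o, ∃ γ ∈ C, β ≤ γ) ∧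
    (∀ S : Set Ordinal.{0}, S ⊆ C → S.Nonempty → sSup S < o → sSup S ∈ C)

/-- CUB: the set of `η ∈ ^κ2` taking value 1 on some club of `κ`. -/
def CUB (κ : Cardinal.{0}) : Set (Ordinal.{0} → Bool) :=
  {η | ∃ C : Set Ordinal.{0}, ClubIn κ.ord C ∧ ∀ i ∈ C, η i = true}

/-- `A ⊆ ^κ2` has strong measure zero. -/
def SMZ (κ : Cardinal.{0}) (A : Set (Ordinal.{0} → Bool)) : Prop :=
  ∀ X : Set Ordinal.{0}, X ⊆ Set.Iio κ.ord → #X = Cardinal.lift.{1} κ →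
    ∃ f : Ordinal.{0} → (Ordinal.{0} → Bool), A ⊆ ⋃ ξ ∈ X, cyl ξ (f ξ)

/-- `f <*_κ g` on the index set `X`: `|{i ∈ X : f i ≥ g i}| < κ`. -/
def LtStarOn (κ : Cardinal.{0}) (X : Set Ordinal.{0}) (f g : Ordinal.{0} → Ordinal.{0}) : Prop :=
  #{i : Ordinal | i ∈ X ∧ g i ≤ f i} < Cardinal.lift.{1} κ

/-- `f <*_κ g` on all of `κ`. -/
def LtStar (κ : Cardinal.{0}) (f g : Ordinal.{0} → Ordinal.{0}) : Prop :=
  LtStarOn κ (Set.Iio κ.ord) f g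

/-- `f` maps ordinals below `κ` to ordinals below `κ`, i.e. `f ∈ ^κκ`. -/
def IntoKappa (κ : Cardinal.{0}) (f : Ordinal.{0} → Ordinal.{0}) : Prop :=
  ∀ i < κ.ord, f i < κ.ord

/-- `F ⊆ ^κκ` is `<*`-bounded. -/
def BoundedFam (κ : Cardinal.{0}) (F : Set (Ordinal.{0} → Ordinal.{0})) : Prop :=
  ∃ g, IntoKappa κ g ∧ ∀ f ∈ F, LtStar κ f g

/-- `F ⊆ ^κκ` is dominating. -/
def DominatingFam (κ : Cardinal.{0}) (F : Set (Ordinal.{0} → Ordinal.{0})) : Prop :=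
  ∀ g, IntoKappa κ g → ∃ f ∈ F, LtStar κ g f

/-- A coding family: for each `i < κ`, `F i` is an injection of `^i2` into `κ`
(it depends only on, and is injective on, restrictions to `i`). -/
def CodingOK (κ : Cardinal.{0}) (F : Ordinal.{0} → (Ordinal.{0} → Bool) → Ordinal.{0}) : Prop :=
  (∀ i < κ.ord, ∀ ν : Ordinal.{0} → Bool, F i ν < κ.ord) ∧
  (∀ i : Ordinal.{0}, ∀ ν ν' : Ordinal.{0} → Bool, (∀ j < i, ν j = ν' j) → F i ν = F i ν') ∧
  (∀ i < κ.ord, ∀ ν ν' : Ordinal.{0} → Bool, F i ν = F i ν' → ∀ j < i, ν j = ν' j)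

/-- `g` (restricted to domain `β`) is a strictly increasing continuous sequence
of ordinals below `κ`. -/
def SIC (κ : Cardinal.{0}) (β : Ordinal.{0}) (g : Ordinal.{0} → Ordinal.{0}) : Prop :=
  (∀ i < β, g i < κ.ord) ∧
  (∀ i j, i < j → j < β → g i < g j) ∧
  (∀ δ, δ < β → Order.IsSuccLimit δ → g δ = sSup (g '' Set.Iio δ))

/-- The open sets `A_ν` of the generalized Souslin representation of CUB:
if `ν` (of length `β`) is strictly increasing and continuous then
`A_ν = {η : ∀ i ∈ dom ν, η (ν i) = 1}`, and `A_ν = ∅` otherwise. -/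
def ANu (κ : Cardinal.{0}) (β : Ordinal.{0}) (g : Ordinal.{0} → Ordinal.{0}) : Set (Ordinal.{0} → Bool) :=
  {η | SIC κ β g ∧ ∀ i < β, η (g i) = true}

/-- The property of Baire in `^κ2` with the bounded topology. -/
def BaireProp (κ : Cardinal.{0}) (A : Set (Ordinal.{0} → Bool)) : Prop :=
  ∃ O, IsOpenB κ O ∧ MeagerB κ ((O \ A) ∪ (A \ O))

/-! Given nowhere dense sets `R ξ` (`ξ < κ`), build by recursion an increasing, coherent sequence
of conditions `(len ξ, pat ξ)` extending `ν`: stage `ξ` glues the earlier stages together, puts a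
`0` at their supremum `gap ξ`, and then extends so that its basic open set misses `R ξ`.
Regularity of `κ` keeps every stage below `κ`. The union `point` of the stages lies in `[ν]` and in
no `R ξ`, and it vanishes on the range of the normal function `gap`, a club. Two clubs of `κ` meet
because `cf κ > ω`, so `point ∉ CUB`. -/

theorem ClubIn.inter_nonempty {o : Ordinal.{0}} (ho : ℵ₀ < o.cof) {C D : Set Ordinal.{0}}
    (hC : ClubIn o C) (hD : ClubIn o D) : (C ∩ D).Nonempty := by
  choose! p hpC hle_p using hC.2.1
  choose! q hqD hle_q using hD.2.1
  -- `x` alternates between `C` and `D`: `x n ≤ p (x n) ≤ x (n + 1)`, with `p (x n) ∈ C`.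
  let x : ℕ → Ordinal.{0} := fun n => Nat.rec 0 (fun _ y => q (p y)) n
  have hx : ∀ n, x n < o ∧ p (x n) ∈ C ∧ x (n + 1) ∈ D := by
    intro n
    induction n with
    | zero =>
      have h0 : x 0 < o := pos_iff_ne_zero.2 fun h => by simp [h] at ho
      exact ⟨h0, hpC _ h0, hqD _ (hC.1 (hpC _ h0))⟩
    | succ n ih =>
      have h : x (n + 1) < o := hD.1 ih.2.2
      exact ⟨h, hpC _ h, hqD _ (hC.1 (hpC _ h))⟩
  have hsup_eq : ⨆ n, p (x n) = ⨆ n, x (n + 1) := by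
    apply le_antisymm <;> refine Ordinal.iSup_le fun n => ?_
    · exact (hle_q _ (hC.1 (hx n).2.1)).trans (Ordinal.le_iSup (fun n => x (n + 1)) n)
    · exact (hle_p _ (hx (n + 1)).1).trans (Ordinal.le_iSup (fun n => p (x n)) (n + 1))
  have hsup_lt : ⨆ n, p (x n) < o :=
    Ordinal.iSup_lt_of_lt_cof (by rwa [Cardinal.mk_nat]) fun n => hC.1 (hx n).2.1
  refine ⟨⨆ n, p (x n), hC.2.2 _ ?_ (range_nonempty _) hsup_lt, ?_⟩
  · exact range_subset_iff.2 fun n => (hx n).2.1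
  · rw [hsup_eq] at hsup_lt ⊢
    exact hD.2.2 _ (range_subset_iff.2 fun n => (hx n).2.2) (range_nonempty _) hsup_lt

theorem clubIn_image_Iio {o : Ordinal.{0}} {f : Ordinal.{0} → Ordinal.{0}} (hf : Order.IsNormal f)
    (hfo : ∀ ξ < o, f ξ < o) : ClubIn o (f '' Iio o) := by
  refine ⟨image_subset_iff.2 hfo, fun ξ hξ => ⟨f ξ, mem_image_of_mem f hξ, hf.strictMono.le_apply⟩,
    fun S hS hSne hSo => ?_⟩
  set T := f ⁻¹' S ∩ Iio o
  have hTS : f '' T = S := by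
    rw [image_preimage_inter]
    exact inter_eq_left.2 hS
  have hT : T.Nonempty := by
    rw [← hTS] at hSne
    exact hSne.of_image
  have hfT : f (sSup T) = sSup S := by
    rw [hf.map_sSup hT ⟨o, fun ξ hξ => hξ.2.le⟩, hTS]
  exact ⟨sSup T, hf.strictMono.le_apply.trans_lt (hfT ▸ hSo), hfT⟩

theorem notMem_CUB_of_clubIn {κ : Cardinal.{0}} (hκ : ℵ₀ < κ.ord.cof) {η : Ordinal.{0} → Bool}
    {C : Set Ordinal.{0}} (hC : ClubIn κ.ord C) (hη : ∀ i ∈ C, η i = false) : η ∉ CUB κ := by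
  rintro ⟨D, hD, hηD⟩
  obtain ⟨i, hiC, hiD⟩ := hC.inter_nonempty hκ hD
  simpa [hη i hiC] using hηD i hiD

namespace GenericBranch

variable (β : Ordinal.{0}) (ν : Ordinal.{0} → Bool)
  (next : Ordinal.{0} → Ordinal.{0} → (Ordinal.{0} → Bool) → Ordinal.{0} × (Ordinal.{0} → Bool))

open Classical in
def stage : Ordinal.{0} → Ordinal.{0} × (Ordinal.{0} → Bool) :=
  WellFounded.fix wellFounded_lt fun ξ prev =>
    let gap := max β (⨆ ζ : Iio ξ, (prev ζ ζ.2).1)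
    next ξ (gap + 1) <| Function.update
      (fun i => if i < β then ν i else decide (∃ ζ : Iio ξ, i < (prev ζ ζ.2).1 ∧ (prev ζ ζ.2).2 i))
      gap false

def len (ξ : Ordinal.{0}) : Ordinal.{0} := (stage β ν next ξ).1

def pat (ξ : Ordinal.{0}) : Ordinal.{0} → Bool := (stage β ν next ξ).2

def gap (ξ : Ordinal.{0}) : Ordinal.{0} := max β (⨆ ζ : Iio ξ, len β ν next ζ)

open Classical in
def glued (ξ : Ordinal.{0}) (i : Ordinal.{0}) : Bool :=
  if i < β then ν i else decide (∃ ζ : Iio ξ, i < len β ν next ζ ∧ pat β ν next ζ i)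

def point (i : Ordinal.{0}) : Bool := pat β ν next i i

theorem stage_eq (ξ : Ordinal.{0}) :
    stage β ν next ξ =
      next ξ (gap β ν next ξ + 1) (Function.update (glued β ν next ξ) (gap β ν next ξ) false) := by
  rw [stage, WellFounded.fix_eq]
  rfl

theorem le_gap (ξ : Ordinal.{0}) : β ≤ gap β ν next ξ := le_max_left _ _

theorem len_le_gap {ζ ξ : Ordinal.{0}} (h : ζ < ξ) : len β ν next ζ ≤ gap β ν next ξ :=
  (Ordinal.le_iSup (fun ζ : Iio ξ => len β ν next ζ) ⟨ζ, h⟩).trans (le_max_right _ _)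

theorem gap_lt_ord {κ : Cardinal.{0}} (hreg : κ.IsRegular) (hβ : β < κ.ord)
    (hbound : ∀ ξ < κ.ord, ∀ b < κ.ord, ∀ u, (next ξ b u).1 < κ.ord) :
    ∀ ξ < κ.ord, gap β ν next ξ < κ.ord := by
  have hlim : Order.IsSuccLimit κ.ord := Cardinal.isSuccLimit_ord hreg.aleph0_le
  intro ξ
  induction ξ using WellFoundedLT.induction with
  | ind ξ ih =>
    intro hξ
    refine max_lt hβ (Ordinal.lift_iSup_lt_of_lt_cof ?_ fun ζ => ?_)
    · rw [Cardinal.mk_Iio_ordinal, Cardinal.lift_id'.{0, 1}, ← Ordinal.lift_cof, hreg.cof_ord,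
        Cardinal.lift_lt]
      exact Cardinal.lt_ord.1 hξ
    · have hζ : ζ.1 < κ.ord := ζ.2.trans hξ
      rw [len, stage_eq]
      exact hbound _ hζ _ (hlim.add_one_lt (ih ζ ζ.2 hζ)) _

variable {next} (hnext : ∀ ξ b u, b ≤ (next ξ b u).1 ∧ ∀ i < b, (next ξ b u).2 i = u i)
include hnext

theorem gap_lt_len (ξ : Ordinal.{0}) : gap β ν next ξ < len β ν next ξ := by
  rw [len, stage_eq]
  exact Order.add_one_le_iff.1 (hnext _ _ _).1

theorem pat_eq_update {ξ i : Ordinal.{0}} (hi : i ≤ gap β ν next ξ) :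
    pat β ν next ξ i = Function.update (glued β ν next ξ) (gap β ν next ξ) false i := by
  rw [pat, stage_eq]
  exact (hnext _ _ _).2 i (Order.lt_add_one_iff.2 hi)

theorem pat_gap (ξ : Ordinal.{0}) : pat β ν next ξ (gap β ν next ξ) = false := by
  rw [pat_eq_update β ν hnext le_rfl, Function.update_self]

theorem pat_of_lt_gap {ξ i : Ordinal.{0}} (hi : i < gap β ν next ξ) :
    pat β ν next ξ i = glued β ν next ξ i := by
  rw [pat_eq_update β ν hnext hi.le, Function.update_of_ne hi.ne]

theorem pat_of_lt {ξ i : Ordinal.{0}} (hi : i < β) : pat β ν next ξ i = ν i := by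
  rw [pat_of_lt_gap β ν hnext (hi.trans_le (le_gap β ν next ξ)), glued, if_pos hi]

theorem pat_eq_pat_of_lt_len {ζ ξ i : Ordinal.{0}} (hζ : ζ < ξ) (hi : i < len β ν next ζ) :
    pat β ν next ξ i = pat β ν next ζ i := by
  induction ξ using WellFoundedLT.induction generalizing ζ with
  | ind ξ ih =>
    rw [pat_of_lt_gap β ν hnext (hi.trans_le (len_le_gap β ν next hζ)), glued]
    split_ifs with hiβ
    · rw [pat_of_lt β ν hnext hiβ]
    have hagree : ∀ ζ' < ξ, i < len β ν next ζ' → pat β ν next ζ' i = pat β ν next ζ i := by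
      intro ζ' hζ' hi'
      rcases lt_trichotomy ζ' ζ with h | rfl | h
      · exact (ih ζ hζ h hi').symm
      · rfl
      · exact ih ζ' hζ' h hi
    cases hpat : pat β ν next ζ i
    · simpa using fun ζ' hi' hζ' => (hagree ζ' hζ' hi').trans hpat
    · simpa using ⟨ζ, hi, hζ, hpat⟩

theorem gap_strictMono : StrictMono (gap β ν next) := fun _ _ h =>
  (gap_lt_len β ν hnext _).trans_le (len_le_gap β ν next h)

theorem gap_isNormal : Order.IsNormal (gap β ν next) := by
  refine Order.isNormal_iff.2 ⟨gap_strictMono β ν hnext, fun δ hδ a ha => max_le ?_ ?_⟩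
  · exact (le_gap β ν next 0).trans (ha 0 hδ.bot_lt)
  · refine Ordinal.iSup_le fun ζ => ?_
    exact (len_le_gap β ν next (lt_add_one ζ.1)).trans (ha _ (hδ.add_one_lt ζ.2))

theorem point_eq_pat {ξ i : Ordinal.{0}} (hi : i < len β ν next ξ) :
    point β ν next i = pat β ν next ξ i := by
  rcases lt_trichotomy i ξ with h | rfl | h
  · exact (pat_eq_pat_of_lt_len β ν hnext h
      ((gap_strictMono β ν hnext).le_apply.trans_lt (gap_lt_len β ν hnext i))).symm
  · rfl
  · exact pat_eq_pat_of_lt_len β ν hnext h hi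

theorem point_mem_cyl_len {ξ : Ordinal.{0}} : point β ν next ∈ cyl (len β ν next ξ) (pat β ν next ξ) :=
  fun _ hi => point_eq_pat β ν hnext hi

theorem point_mem_cyl : point β ν next ∈ cyl β ν := fun _ hi => pat_of_lt β ν hnext hi

theorem point_gap (ξ : Ordinal.{0}) : point β ν next (gap β ν next ξ) = false :=
  (point_eq_pat β ν hnext (gap_lt_len β ν hnext ξ)).trans (pat_gap β ν hnext ξ)

end GenericBranch

theorem exists_strategy_of_nwd {κ : Cardinal.{0}} {R : Ordinal.{0} → Set (Ordinal.{0} → Bool)}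
    (hR : ∀ ξ < κ.ord, Nwd κ (R ξ)) :
    ∃ next : Ordinal.{0} → Ordinal.{0} → (Ordinal.{0} → Bool) → Ordinal.{0} × (Ordinal.{0} → Bool),
      (∀ ξ b u, b ≤ (next ξ b u).1 ∧ ∀ i < b, (next ξ b u).2 i = u i) ∧
      ∀ ξ < κ.ord, ∀ b < κ.ord, ∀ u,
        (next ξ b u).1 < κ.ord ∧ cyl (next ξ b u).1 (next ξ b u).2 ∩ R ξ = ∅ := by
  have hstep : ∀ ξ b (u : Ordinal.{0} → Bool), ∃ p : Ordinal.{0} × (Ordinal.{0} → Bool),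
      (b ≤ p.1 ∧ ∀ i < b, p.2 i = u i) ∧
      (ξ < κ.ord → b < κ.ord → p.1 < κ.ord ∧ cyl p.1 p.2 ∩ R ξ = ∅) := by
    intro ξ b u
    by_cases h : ξ < κ.ord ∧ b < κ.ord
    · obtain ⟨γ, hγ, hbγ, η, hη, hcyl⟩ := hR ξ h.1 b h.2 u
      exact ⟨(γ, η), ⟨hbγ, hη⟩, fun _ _ => ⟨hγ, hcyl⟩⟩
    · exact ⟨(b, u), ⟨le_rfl, fun _ _ => rfl⟩, fun hξ hb => absurd ⟨hξ, hb⟩ h⟩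
  choose next hext hR using hstep
  exact ⟨next, hext, fun ξ hξ b hb u => hR ξ b u hξ hb⟩

open GenericBranch in
theorem exists_mem_cyl_diff_CUB_forall_notMem {κ : Cardinal.{0}} (hreg : κ.IsRegular)
    (hκ : ℵ₀ < κ) {β : Ordinal.{0}} (hβ : β < κ.ord) (ν : Ordinal.{0} → Bool)
    {R : Ordinal.{0} → Set (Ordinal.{0} → Bool)} (hR : ∀ ξ < κ.ord, Nwd κ (R ξ)) :
    ∃ η ∈ cyl β ν \ CUB κ, ∀ ξ < κ.ord, η ∉ R ξ := by
  obtain ⟨next, hext, hnext⟩ := exists_strategy_of_nwd hR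
  have hgap := gap_lt_ord β ν next hreg hβ fun ξ hξ b hb u => (hnext ξ hξ b hb u).1
  have hclub : ClubIn κ.ord (gap β ν next '' Iio κ.ord) :=
    clubIn_image_Iio (gap_isNormal β ν hext) hgap
  refine ⟨point β ν next, ⟨point_mem_cyl β ν hext, ?_⟩, fun ξ hξ hmem => ?_⟩
  · refine notMem_CUB_of_clubIn (by rwa [hreg.cof_ord]) hclub ?_
    rintro _ ⟨ξ, -, rfl⟩
    exact point_gap β ν hext ξ
  · have hlim : Order.IsSuccLimit κ.ord := Cardinal.isSuccLimit_ord hreg.aleph0_le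
    have hdisj : cyl (len β ν next ξ) (pat β ν next ξ) ∩ R ξ = ∅ := by
      rw [len, pat, stage_eq]
      exact (hnext ξ hξ _ (hlim.add_one_lt (hgap ξ hξ)) _).2
    exact hdisj.subset ⟨point_mem_cyl_len β ν hext, hmem⟩

theorem basic_minus_CUB_not_meager_general (κ : Cardinal.{0}) (hreg : κ.IsRegular) (hκ : ℵ₀ < κ)
    (β : Ordinal.{0}) (hβ : β < κ.ord) (ν : Ordinal.{0} → Bool) :
    ¬ MeagerB κ (cyl β ν \ CUB κ) := by
  rintro ⟨R, hR, hcover⟩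
  obtain ⟨η, hη, hηR⟩ := exists_mem_cyl_diff_CUB_forall_notMem hreg hκ hβ ν hR
  obtain ⟨ξ, hξ, hmem⟩ := mem_iUnion₂.1 (hcover hη)
  exact hηR ξ hξ hmem

/-- for every nonempty basic open set `[ν] ⊆ ^κ2`, the set
`[ν] \ CUB` is not meager. -/
theorem basic_minus_CUB_not_meager (κ : Cardinal.{0}) (hreg : κ.IsRegular) (hκ : ℵ₀ < κ)
    (β : Ordinal.{0}) (hβ : β < κ.ord) (ν : Ordinal.{0} → Bool)
    (hne : (cyl β ν).Nonempty) :
    ¬ MeagerB κ (cyl β ν \ CUB κ) :=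
  basic_minus_CUB_not_meager_general κ hreg hκ β hβ ν

end
end

section
/- Let $\kappa$ be regular uncountable. In ${}^{\kappa}2$ with the bounded topology, every set of the form obtained by the generalized Souslin operation applied to a system of Borel sets with the property of Baire need not have the property of Baire; concretely, there is a system of open sets $\langle A_{\nu} : \nu \in {}^{<\kappa}\kappa \rangle$ such that $\bigcup_{f \in {}^{\kappa}\kappa} \bigcap_{i<\kappa} A_{f\upharpoonright i}$ does not have the property of Baire. -/
/-
The Souslin set `S` of the system `A_ν` consists of the `η` that are `1` along the range of some
strictly increasing continuous `B : κ → κ`. Given an open `O` and a meager `M = ⋃_{ξ<κ} R_ξ`, a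
fusion of length `κ` inside any basic open set produces `η ∉ M` that is constant `b` along such a
`B`: at stage `ξ` the coordinate `B ξ`, the supremum of the lengths of the earlier conditions, is
still free, it is set to `b`, and the condition is then extended to avoid `R_ξ`. If `O = ∅`, take
`b = 1`, so `η ∈ S \ O`. Otherwise take `b = 0` inside a basic subset of `O`; as `κ` is regular
uncountable, `B` and any other strictly increasing continuous function have a common fixed point
`δ < κ`, where `η δ` would have to be `0` and `1`, so `η ∈ O \ S`.
-/

open Cardinal Set

noncomputable section

universe u

open Ordinal Order

lemma sSup_image_Iio_lt_ord {κ : Cardinal.{u}} (hreg : κ.IsRegular) {ξ : Ordinal.{u}}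
    (hξ : ξ < κ.ord) {g : Ordinal.{u} → Ordinal.{u}} (hg : ∀ ζ < ξ, g ζ < κ.ord) :
    sSup (g '' Iio ξ) < κ.ord := by
  refine sSup_lt_of_lt_cof ?_ (by rintro _ ⟨ζ, hζ, rfl⟩; exact hg ζ hζ)
  calc #(g '' Iio ξ) ≤ #(Iio ξ) := mk_image_le
    _ = Cardinal.lift ξ.card := Cardinal.mk_Iio_ordinal ξ
    _ < Cardinal.lift κ := Cardinal.lift_lt.2 (Cardinal.lt_ord.1 hξ)
    _ = (Ordinal.lift κ.ord).cof := by rw [← lift_cof, hreg.cof_ord]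

lemma bddAbove_image_Iio (g : Ordinal.{u} → Ordinal.{u}) (ξ : Ordinal.{u}) :
    BddAbove (g '' Iio ξ) :=
  bddAbove_of_small

theorem WellFoundedLT.exists_eq_apply_of_congr {β α : Type*} [LT β] [WellFoundedLT β] [Nonempty α]
    (F : (β → α) → β → α) (hF : ∀ g g' x, (∀ y < x, g y = g' y) → F g x = F g' x) :
    ∃ H : β → α, ∀ x, H x = F H x := by
  classical
  refine ⟨wellFounded_lt.fix fun x IH =>
    F (fun y => if h : y < x then IH y h else Classical.arbitrary α) x, fun x => ?_⟩
  rw [WellFounded.fix_eq]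
  exact hF _ _ x fun y hy => dif_pos hy

lemma StrictMonoOn.le_apply_of_lt {β : Type*} [LinearOrder β] [WellFoundedLT β] {o : β}
    {f : β → β} (hf : StrictMonoOn f (Iio o)) {x : β} (hx : x < o) : x ≤ f x := by
  induction x using WellFoundedLT.induction with
  | _ x IH =>
    exact le_of_forall_lt fun z hz => (IH z hz (hz.trans hx)).trans_lt (hf (hz.trans hx) hx hz)

namespace SIC

variable {κ : Cardinal.{0}} {β : Ordinal.{0}} {f g : Ordinal.{0} → Ordinal.{0}}

lemma strictMonoOn (hf : SIC κ β f) : StrictMonoOn f (Iio β) :=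
  fun _ _ _ hj hij => hf.2.1 _ _ hij hj

lemma mono (hf : SIC κ β f) {γ : Ordinal.{0}} (hγ : γ ≤ β) : SIC κ γ f :=
  ⟨fun i hi => hf.1 i (hi.trans_le hγ), fun i j hij hj => hf.2.1 i j hij (hj.trans_le hγ),
    fun δ hδ => hf.2.2 δ (hδ.trans_le hγ)⟩

lemma of_forall_lt (hβ : IsSuccPrelimit β) (hf : ∀ i < β, SIC κ i f) : SIC κ β f :=
  ⟨fun i hi => (hf _ (hβ.succ_lt hi)).1 i (lt_succ i),
    fun i j hij hj => (hf _ (hβ.succ_lt hj)).2.1 i j hij (lt_succ j),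
    fun δ hδ => (hf _ (hβ.succ_lt hδ)).2.2 δ (lt_succ δ)⟩

lemma congr (hfg : ∀ j < β, f j = g j) (hf : SIC κ β f) : SIC κ β g := by
  refine ⟨fun j hj => hfg j hj ▸ hf.1 j hj, fun i j hij hj => ?_, fun δ hδ hlim => ?_⟩
  · rw [← hfg i (hij.trans hj), ← hfg j hj]
    exact hf.2.1 i j hij hj
  · rw [← hfg δ hδ, hf.2.2 δ hδ hlim, image_congr (s := Iio δ) fun x hx => hfg x (hx.trans hδ)]

lemma apply_eq_self (hf : SIC κ β f) {δ : Ordinal.{0}} (hδ : δ < β) (hlim : IsSuccLimit δ)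
    (hlt : ∀ x < δ, f x < δ) : f δ = δ := by
  refine le_antisymm ?_ (hf.strictMonoOn.le_apply_of_lt hδ)
  rw [hf.2.2 δ hδ hlim]
  exact csSup_le' (by rintro _ ⟨x, hx, rfl⟩; exact (hlt x hx).le)

lemma apply_nfp_eq_self (hreg : κ.IsRegular) (hκ : ℵ₀ < κ) (hf : SIC κ κ.ord f)
    {h : Ordinal.{0} → Ordinal.{0}} (hh : ∀ x < κ.ord, h x < κ.ord)
    (hfh : ∀ x < κ.ord, f x < h x) : f (nfp h 0) = nfp h 0 := by
  have hδ : nfp h 0 < κ.ord := nfp_lt_ord_of_isRegular hreg hκ.ne' hh hreg.ord_pos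
  have below : ∀ x < nfp h 0, ∃ y, x < y ∧ y < κ.ord ∧ h y ≤ nfp h 0 := by
    intro x hx
    obtain ⟨n, hn⟩ := lt_nfp_iff.1 hx
    refine ⟨_, hn, (iterate_le_nfp h 0 n).trans_lt hδ, ?_⟩
    simpa only [Function.iterate_succ_apply'] using iterate_le_nfp h 0 (n + 1)
  have hlim : IsSuccLimit (nfp h 0) := by
    refine ⟨?_, isSuccPrelimit_of_succ_lt fun x hx => ?_⟩
    · refine not_isMin_of_lt (b := 0) (zero_le.trans_lt ((hfh 0 hreg.ord_pos).trans_le ?_))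
      simpa using iterate_le_nfp h 0 1
    · obtain ⟨y, hxy, hy, hhy⟩ := below x hx
      exact (succ_le_of_lt hxy).trans_lt
        (((hf.strictMonoOn.le_apply_of_lt hy).trans_lt (hfh y hy)).trans_le hhy)
  refine hf.apply_eq_self hδ hlim fun x hx => ?_
  obtain ⟨y, hxy, hy, hhy⟩ := below x hx
  exact ((hf.2.1 x y hxy hy).trans (hfh y hy)).trans_le hhy

lemma exists_common_fixed (hreg : κ.IsRegular) (hκ : ℵ₀ < κ) (hf : SIC κ κ.ord f)
    (hg : SIC κ κ.ord g) : ∃ δ < κ.ord, f δ = δ ∧ g δ = δ := by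
  have hlim : IsSuccLimit κ.ord := Cardinal.isSuccLimit_ord hreg.aleph0_le
  have hh : ∀ x < κ.ord, succ (max (f x) (g x)) < κ.ord :=
    fun x hx => hlim.succ_lt (max_lt (hf.1 x hx) (hg.1 x hx))
  exact ⟨_, nfp_lt_ord_of_isRegular hreg hκ.ne' hh hreg.ord_pos,
    hf.apply_nfp_eq_self hreg hκ hh fun x _ => lt_succ_of_le (le_max_left _ _),
    hg.apply_nfp_eq_self hreg hκ hh fun x _ => lt_succ_of_le (le_max_right _ _)⟩

end SIC

namespace BanachMazur

/-- A condition `(γ, η)` stands for the basic open set `cyl γ η`. -/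
abbrev Condition : Type 1 := Ordinal.{0} × (Ordinal.{0} → Bool)

variable {κ : Cardinal.{0}} {R : Ordinal.{0} → Set (Ordinal.{0} → Bool)} {β₀ : Ordinal.{0}}
  {d : Ordinal.{0} → Bool} {H H' : Ordinal.{0} → Condition} {ξ ζ i : Ordinal.{0}}

def lenSup (β₀ : Ordinal.{0}) (H : Ordinal.{0} → Condition) (ξ : Ordinal.{0}) : Ordinal.{0} :=
  β₀ ⊔ sSup ((fun ζ => (H ζ).1) '' Iio ξ)

def deciding (H : Ordinal.{0} → Condition) (ξ i : Ordinal.{0}) : Set Ordinal.{0} :=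
  {ζ | ζ < ξ ∧ i < (H ζ).1}

open Classical in
/-- The union of the conditions played before stage `ξ`, read off the earliest condition deciding
each coordinate; undecided coordinates take the default value `d`. -/
def glue (d : Ordinal.{0} → Bool) (H : Ordinal.{0} → Condition) (ξ i : Ordinal.{0}) : Bool :=
  if (deciding H ξ i).Nonempty then (H (sInf (deciding H ξ i))).2 i else d i

def IsPlay (κ : Cardinal.{0}) (R : Ordinal.{0} → Set (Ordinal.{0} → Bool)) (β₀ : Ordinal.{0})
    (d : Ordinal.{0} → Bool) (H : Ordinal.{0} → Condition) : Prop :=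
  ∀ ξ < κ.ord, (H ξ).1 < κ.ord ∧ lenSup β₀ H ξ < (H ξ).1 ∧
    (∀ i ≤ lenSup β₀ H ξ, (H ξ).2 i = glue d H ξ i) ∧ cyl (H ξ).1 (H ξ).2 ∩ R ξ = ∅

lemma self_le_lenSup : β₀ ≤ lenSup β₀ H ξ :=
  le_sup_left

lemma le_lenSup (hζ : ζ < ξ) : (H ζ).1 ≤ lenSup β₀ H ξ :=
  (le_csSup (bddAbove_image_Iio _ ξ) ⟨ζ, hζ, rfl⟩).trans le_sup_right

lemma lenSup_mono : Monotone (lenSup β₀ H) := fun _ _ h =>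
  sup_le_sup_left (csSup_le_csSup' (bddAbove_image_Iio _ _) (image_mono (Iio_subset_Iio h))) _

lemma lenSup_eq_sSup (hξ : IsSuccLimit ξ) : lenSup β₀ H ξ = sSup (lenSup β₀ H '' Iio ξ) := by
  have hbdd : BddAbove (lenSup β₀ H '' Iio ξ) := bddAbove_image_Iio _ ξ
  refine le_antisymm (sup_le ?_ (csSup_le' ?_)) (csSup_le' ?_)
  · exact le_sup_left.trans (le_csSup hbdd ⟨0, hξ.bot_lt, rfl⟩)
  · rintro _ ⟨ζ, hζ, rfl⟩
    exact (le_lenSup (lt_succ ζ)).trans (le_csSup hbdd ⟨succ ζ, hξ.succ_lt hζ, rfl⟩)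
  · rintro _ ⟨ζ, hζ, rfl⟩
    exact lenSup_mono hζ.le

lemma lenSup_congr (h : ∀ ζ < ξ, H ζ = H' ζ) : lenSup β₀ H ξ = lenSup β₀ H' ξ := by
  rw [lenSup, lenSup, image_congr (s := Iio ξ) fun ζ hζ => by rw [h ζ hζ]]

lemma glue_congr (h : ∀ ζ < ξ, H ζ = H' ζ) : glue d H ξ = glue d H' ξ := by
  have hdec : ∀ i, deciding H ξ i = deciding H' ξ i := fun i => by
    ext ζ
    exact and_congr_right fun hζ => by rw [h ζ hζ]
  funext i
  rw [glue, glue, hdec]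
  split_ifs with hne
  · rw [h _ (csInf_mem hne).1]
  · rfl

lemma glue_eq (hcoh : ∀ ζ' < ζ, ∀ i < (H ζ').1, (H ζ).2 i = (H ζ').2 i) (hζ : ζ < ξ)
    (hi : i < (H ζ).1) : glue d H ξ i = (H ζ).2 i := by
  have hne : (deciding H ξ i).Nonempty := ⟨ζ, hζ, hi⟩
  rw [glue, if_pos hne]
  rcases (csInf_le' (show ζ ∈ deciding H ξ i from ⟨hζ, hi⟩)).lt_or_eq with hlt | heq
  · exact (hcoh _ hlt i (csInf_mem hne).2).symm
  · rw [heq]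

lemma glue_of_forall_le (h : ∀ ζ < ξ, (H ζ).1 ≤ i) : glue d H ξ i = d i := by
  rw [glue, if_neg]
  rintro ⟨ζ, hζ, hi⟩
  exact (h ζ hζ).not_gt hi

namespace IsPlay

lemma coherent (hH : IsPlay κ R β₀ d H) (hζ : ζ < ξ) (hξ : ξ < κ.ord) (hi : i < (H ζ).1) :
    (H ξ).2 i = (H ζ).2 i := by
  induction ξ using WellFoundedLT.induction generalizing ζ i with
  | _ ξ IH =>
    rw [(hH ξ hξ).2.2.1 i (hi.le.trans (le_lenSup hζ)),
      glue_eq (fun ζ' hζ' j hj => IH ζ hζ hζ' (hζ.trans hξ) hj) hζ hi]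

lemma glue_ord_eq (hH : IsPlay κ R β₀ d H) (hζ : ζ < κ.ord) (hi : i < (H ζ).1) :
    glue d H κ.ord i = (H ζ).2 i :=
  glue_eq (fun _ hζ' _ hj => hH.coherent hζ' hζ hj) hζ hi

lemma glue_ord_notMem (hH : IsPlay κ R β₀ d H) (hξ : ξ < κ.ord) : glue d H κ.ord ∉ R ξ :=
  fun hmem => eq_empty_iff_forall_notMem.1 (hH ξ hξ).2.2.2 _
    ⟨fun _ hi => hH.glue_ord_eq hξ hi, hmem⟩

lemma glue_ord_of_lt (hH : IsPlay κ R β₀ d H) (hκ : 0 < κ.ord) (hi : i < β₀) :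
    glue d H κ.ord i = d i := by
  have hi0 : i ≤ lenSup β₀ H 0 := hi.le.trans self_le_lenSup
  rw [hH.glue_ord_eq hκ (hi0.trans_lt (hH 0 hκ).2.1), (hH 0 hκ).2.2.1 i hi0,
    glue_of_forall_le fun ζ hζ => (zero_le.not_gt hζ).elim]

lemma glue_ord_lenSup (hH : IsPlay κ R β₀ d H) (hξ : ξ < κ.ord) :
    glue d H κ.ord (lenSup β₀ H ξ) = d (lenSup β₀ H ξ) := by
  rw [hH.glue_ord_eq hξ (hH ξ hξ).2.1, (hH ξ hξ).2.2.1 _ le_rfl,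
    glue_of_forall_le fun ζ hζ => le_lenSup hζ]

lemma sic_lenSup (hH : IsPlay κ R β₀ d H) : SIC κ κ.ord (lenSup β₀ H) :=
  ⟨fun ξ hξ => (hH ξ hξ).2.1.trans (hH ξ hξ).1,
    fun _ _ hζξ hξ => (hH _ (hζξ.trans hξ)).2.1.trans_le (le_lenSup hζξ),
    fun _ _ hδ => lenSup_eq_sSup hδ⟩

end IsPlay

lemma exists_isPlay (hreg : κ.IsRegular) (hR : ∀ ξ < κ.ord, Nwd κ (R ξ)) (hβ₀ : β₀ < κ.ord)
    (d : Ordinal.{0} → Bool) : ∃ H, IsPlay κ R β₀ d H := by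
  have hlim : IsSuccLimit κ.ord := Cardinal.isSuccLimit_ord hreg.aleph0_le
  have hmove : ∀ (ξ β : Ordinal.{0}) (ν : Ordinal.{0} → Bool), ∃ p : Condition,
      ξ < κ.ord → β < κ.ord →
        p.1 < κ.ord ∧ β ≤ p.1 ∧ (∀ i < β, p.2 i = ν i) ∧ cyl p.1 p.2 ∩ R ξ = ∅ := by
    intro ξ β ν
    by_cases h : ξ < κ.ord ∧ β < κ.ord
    · obtain ⟨γ, hγ, hβγ, η, hη, hRη⟩ := hR ξ h.1 β h.2 ν
      exact ⟨(γ, η), fun _ _ => ⟨hγ, hβγ, hη, hRη⟩⟩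
    · exact ⟨(0, ν), fun hξ hβ => absurd ⟨hξ, hβ⟩ h⟩
  choose move hmove using hmove
  obtain ⟨H, hH⟩ := WellFoundedLT.exists_eq_apply_of_congr
    (fun H ξ => move ξ (succ (lenSup β₀ H ξ)) (glue d H ξ))
    fun H H' ξ h => by simp only [lenSup_congr h, glue_congr h]
  refine ⟨H, fun ξ hξ => ?_⟩
  induction ξ using WellFoundedLT.induction with
  | _ ξ IH =>
    have hlen : succ (lenSup β₀ H ξ) < κ.ord := hlim.succ_lt <| max_lt hβ₀ <|
      sSup_image_Iio_lt_ord hreg hξ fun ζ hζ => (IH ζ hζ (hζ.trans hξ)).1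
    obtain ⟨h1, h2, h3, h4⟩ := hmove ξ _ (glue d H ξ) hξ hlen
    rw [← hH ξ] at h1 h2 h3 h4
    exact ⟨h1, succ_le_iff.1 h2, fun i hi => h3 i (lt_succ_iff.2 hi), h4⟩

end BanachMazur

lemma MeagerB.exists_mem_cyl_notMem {κ : Cardinal.{0}} {M : Set (Ordinal.{0} → Bool)}
    (hreg : κ.IsRegular) (hM : MeagerB κ M) {β₀ : Ordinal.{0}} (hβ₀ : β₀ < κ.ord)
    (ν₀ : Ordinal.{0} → Bool) (b : Bool) :
    ∃ η B, η ∈ cyl β₀ ν₀ ∧ η ∉ M ∧ SIC κ κ.ord B ∧ ∀ j < κ.ord, η (B j) = b := by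
  obtain ⟨R, hR, hMR⟩ := hM
  set d : Ordinal.{0} → Bool := fun i => if i < β₀ then ν₀ i else b
  obtain ⟨H, hH⟩ := BanachMazur.exists_isPlay hreg hR hβ₀ d
  refine ⟨BanachMazur.glue d H κ.ord, _, fun i hi => ?_, fun hη => ?_, hH.sic_lenSup,
    fun ξ hξ => ?_⟩
  · rw [hH.glue_ord_of_lt hreg.ord_pos hi]
    exact if_pos hi
  · obtain ⟨ξ, hξ, hηξ⟩ := mem_iUnion₂.1 (hMR hη)
    exact hH.glue_ord_notMem hξ hηξ
  · rw [hH.glue_ord_lenSup hξ]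
    exact if_neg BanachMazur.self_le_lenSup.not_gt

lemma isOpenB_ANu {κ : Cardinal.{0}} (hreg : κ.IsRegular) {i : Ordinal.{0}} (hi : i < κ.ord)
    (g : Ordinal.{0} → Ordinal.{0}) : IsOpenB κ (ANu κ i g) := by
  have hlim : IsSuccLimit κ.ord := Cardinal.isSuccLimit_ord hreg.aleph0_le
  rintro η ⟨hg, hη⟩
  refine ⟨sSup ((succ ∘ g) '' Iio i),
    sSup_image_Iio_lt_ord hreg hi fun j hj => hlim.succ_lt (hg.1 j hj),
    fun η' hη' => ⟨hg, fun j hj => ?_⟩⟩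
  rw [hη' (g j) ((lt_succ _).trans_le (le_csSup (bddAbove_image_Iio _ i) ⟨j, hj, rfl⟩)), hη j hj]

lemma ANu_congr {κ : Cardinal.{0}} {i : Ordinal.{0}} {f g : Ordinal.{0} → Ordinal.{0}}
    (hfg : ∀ j < i, f j = g j) : ANu κ i f = ANu κ i g := by
  ext η
  exact ⟨fun ⟨hf, hη⟩ => ⟨hf.congr hfg, fun j hj => hfg j hj ▸ hη j hj⟩,
    fun ⟨hg, hη⟩ => ⟨hg.congr fun j hj => (hfg j hj).symm, fun j hj => (hfg j hj).symm ▸ hη j hj⟩⟩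

lemma mem_souslin_ANu_iff {κ : Cardinal.{0}} (hκ : ℵ₀ ≤ κ) {η : Ordinal.{0} → Bool} :
    η ∈ ⋃ f ∈ {f | IntoKappa κ f}, ⋂ i ∈ Iio κ.ord, ANu κ i f ↔
      ∃ B, SIC κ κ.ord B ∧ ∀ j < κ.ord, η (B j) = true := by
  have hlim : IsSuccLimit κ.ord := Cardinal.isSuccLimit_ord hκ
  simp only [mem_iUnion₂, mem_iInter₂, mem_ofPred_eq, mem_Iio]
  constructor
  · rintro ⟨B, -, hB⟩
    exact ⟨B, SIC.of_forall_lt hlim.isSuccPrelimit fun i hi => (hB i hi).1,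
      fun j hj => (hB _ (hlim.succ_lt hj)).2 j (lt_succ j)⟩
  · rintro ⟨B, hB, hη⟩
    exact ⟨B, hB.1, fun i hi => ⟨hB.mono hi.le, fun j hj => hη j (hj.trans hi)⟩⟩

/-- there is a system of open sets `⟨A_ν : ν ∈ ^{<κ}κ⟩` (each
`A_ν` depending only on `ν`) whose generalized Souslin operation
`⋃_{f ∈ ^κκ} ⋂_{i < κ} A_{f ↾ i}` does not have the property of Baire. -/
theorem souslin_not_baire (κ : Cardinal.{0}) (hreg : κ.IsRegular) (hκ : ℵ₀ < κ) :
    ∃ A : Ordinal.{0} → (Ordinal.{0} → Ordinal.{0}) → Set (Ordinal.{0} → Bool),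
      (∀ i < κ.ord, ∀ g, IsOpenB κ (A i g)) ∧
      (∀ i : Ordinal.{0}, ∀ f g : Ordinal.{0} → Ordinal.{0},
        (∀ j < i, f j = g j) → A i f = A i g) ∧
      ¬ BaireProp κ (⋃ f ∈ {f : Ordinal.{0} → Ordinal.{0} | IntoKappa κ f},
        ⋂ i ∈ Set.Iio κ.ord, A i f) := by
  refine ⟨ANu κ, fun i hi => isOpenB_ANu hreg hi, fun i f g => ANu_congr, ?_⟩
  rintro ⟨O, hO, hM⟩
  rcases O.eq_empty_or_nonempty with rfl | ⟨η₀, hη₀⟩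
  · obtain ⟨η, B, -, hηM, hB, hηB⟩ :=
      hM.exists_mem_cyl_notMem hreg hreg.ord_pos (fun _ => true) true
    exact hηM (Or.inr ⟨(mem_souslin_ANu_iff hreg.aleph0_le).2 ⟨B, hB, hηB⟩, notMem_empty η⟩)
  · obtain ⟨i₀, hi₀, hcyl⟩ := hO η₀ hη₀
    obtain ⟨η, B, hη, hηM, hB, hηB⟩ := hM.exists_mem_cyl_notMem hreg hi₀ η₀ false
    refine hηM (Or.inl ⟨hcyl hη, fun hS => ?_⟩)
    obtain ⟨C, hC, hηC⟩ := (mem_souslin_ANu_iff hreg.aleph0_le).1 hS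
    obtain ⟨δ, hδ, hBδ, hCδ⟩ := hB.exists_common_fixed hreg hκ hC
    have hηδ := hηC δ hδ
    rw [hCδ, ← hBδ, hηB δ hδ] at hηδ
    exact Bool.false_ne_true hηδ

end
end
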